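/- There exists a constant C > 0, depending only on H, such that for every integer n ≥ 1 and every t ∈ [0,1], ∫₀^t |ΔK(t,s)| ε(s) ds ≤ C n^{−2H−1/2}. -/
import Mathlib


open MeasureTheory intervalIntegral
open scoped Classical

/-- Grid projection `η(t) = ⌊nt⌋/n`. -/
noncomputable def gridEta (n : ℕ) (t : ℝ) : ℝ := (⌊(n : ℝ) * t⌋ : ℝ) / n

/-- The fractional kernel `K(t,s) = (t-s)^(H-1/2)` for `s < t`, and `0` otherwise. -/
noncomputable def fracK (H t s : ℝ) : ℝ := if s < t then (t - s) ^ (H - 1/2) else 0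

/-- The discretization error kernel `ΔK(t,s) = K(η(t),s) - K(t,s)`. -/
noncomputable def deltaK (H : ℝ) (n : ℕ) (t s : ℝ) : ℝ :=
  fracK H (gridEta n t) s - fracK H t s

/-- `ε(t) = n^(-1/2) (⌈nt⌉/n - t)^(H-1/2)` when `nt ∉ ℤ`, and `ε(t) = 0` when `nt ∈ ℤ`. -/
noncomputable def epsFn (H : ℝ) (n : ℕ) (t : ℝ) : ℝ :=
  if ∃ m : ℤ, (n : ℝ) * t = m then 0
  else (n : ℝ) ^ (-(1/2) : ℝ) * ((⌈(n : ℝ) * t⌉ : ℝ) / n - t) ^ (H - 1/2)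

lemma aux_integral_rpow_sub (e a b r : ℝ) (hr : -1 < r) :
    ∫ s in a..b, (e - s) ^ r = ((e - a) ^ (r+1) - (e - b) ^ (r+1)) / (r+1) := by
  rw [intervalIntegral.integral_comp_sub_left (fun x => x ^ r) e,
    integral_rpow (Or.inl hr)]

lemma aux_ii_rpow_sub (e a b : ℝ) {r : ℝ} (hr : -1 < r) :
    IntervalIntegrable (fun s => (e - s) ^ r) volume a b := by
  have := (intervalIntegrable_rpow' hr (a := e - a) (b := e - b)).comp_sub_left e
  simpa using this

lemma aux_cell_bound {g : ℝ → ℝ} {A a b e r : ℝ} (hr : -1 < r) (hab : a ≤ b) (hbe : b ≤ e)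
    (hA : 0 ≤ A) (hg : IntervalIntegrable g volume a b)
    (h : ∀ s ∈ Set.Icc a b, g s ≤ A * (e - s) ^ r) :
    ∫ s in a..b, g s ≤ A * ((e - a) ^ (r+1) / (r+1)) := by
  have hmaj : IntervalIntegrable (fun s => A * (e - s) ^ r) volume a b :=
    (aux_ii_rpow_sub e a b hr).const_mul A
  have h1 : ∫ s in a..b, g s ≤ ∫ s in a..b, A * (e - s) ^ r :=
    intervalIntegral.integral_mono_on hab hg hmaj h
  refine h1.trans ?_
  rw [intervalIntegral.integral_const_mul, aux_integral_rpow_sub e a b r hr]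
  have hr1 : (0:ℝ) < r + 1 := by linarith
  have hnn : 0 ≤ (e - b) ^ (r+1) := Real.rpow_nonneg (by linarith) _
  gcongr
  linarith

lemma aux_mvt {a b c : ℝ} (ha : 0 < a) (hab : a ≤ b) (hc : c < 0) :
    a ^ c - b ^ c ≤ (-c) * ((b - a) * a ^ (c - 1)) := by
  have hb : 0 < b := lt_of_lt_of_le ha hab
  have h0 : (0:ℝ) ∉ Set.uIcc a b := by
    rw [Set.uIcc_of_le hab]
    intro h
    exact absurd (Set.mem_Icc.1 h).1 (not_le.2 ha)
  have hc1 : c - 1 + 1 = c := by ring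
  have hint : ∫ x in a..b, x ^ (c-1) = (b ^ c - a ^ c) / c := by
    rw [integral_rpow (Or.inr ⟨by intro h; rw [h] at hc1; linarith, h0⟩), hc1]
  have hii : IntervalIntegrable (fun x : ℝ => x ^ (c-1)) volume a b :=
    intervalIntegrable_rpow (Or.inr h0)
  have hle : ∫ x in a..b, x ^ (c-1) ≤ ∫ x in a..b, a ^ (c-1) := by
    apply intervalIntegral.integral_mono_on hab hii intervalIntegrable_const
    intro x hx
    exact Real.rpow_le_rpow_of_nonpos ha (Set.mem_Icc.1 hx).1 (by linarith)
  rw [hint, intervalIntegral.integral_const, smul_eq_mul,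
    div_le_iff_of_neg hc] at hle
  ring_nf at hle ⊢
  linarith

lemma epsFn_nonneg (H : ℝ) (n : ℕ) (t : ℝ) : 0 ≤ epsFn H n t := by
  unfold epsFn
  split
  · exact le_refl 0
  · rename_i h
    have hn : (0:ℝ) < n := by
      rcases Nat.eq_zero_or_pos n with h0 | h0
      · exact absurd ⟨0, by simp [h0]⟩ h
      · exact_mod_cast h0
    have hbase : 0 ≤ (⌈(n : ℝ) * t⌉ : ℝ) / n - t := by
      rw [sub_nonneg, le_div_iff₀ hn, mul_comm]
      exact Int.le_ceil _
    exact mul_nonneg (Real.rpow_nonneg hn.le _) (Real.rpow_nonneg hbase _)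

lemma epsFn_le (H : ℝ) {n j : ℕ} (hn : 0 < n) {s : ℝ}
    (h1 : (j:ℝ)/n ≤ s) (h2 : s ≤ ((j:ℝ)+1)/n) :
    epsFn H n s ≤ (n:ℝ) ^ (-(1/2):ℝ) * (((j:ℝ)+1)/n - s) ^ (H - 1/2) := by
  have hn' : (0:ℝ) < n := by exact_mod_cast hn
  unfold epsFn
  split
  · have : 0 ≤ ((j:ℝ)+1)/n - s := by linarith
    exact mul_nonneg (Real.rpow_nonneg hn'.le _) (Real.rpow_nonneg this _)
  · rename_i h
    have hj1 : (j:ℝ) ≤ (n:ℝ) * s := by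
      rw [div_le_iff₀ hn'] at h1; linarith [h1]
    have hj2 : (n:ℝ) * s ≤ (j:ℝ) + 1 := by
      rw [le_div_iff₀ hn'] at h2; linarith [h2]
    have hceil : (⌈(n : ℝ) * s⌉ : ℝ) = (j:ℝ) + 1 := by
      have h1' : (n:ℝ) * s ≠ (j:ℝ) := fun hc => h ⟨j, by exact_mod_cast hc⟩
      have : ⌈(n : ℝ) * s⌉ = (j:ℤ) + 1 := by
        rw [Int.ceil_eq_iff]
        constructor
        · push_cast
          rcases lt_or_eq_of_le hj1 with h' | h'
          · linarith
          · exact absurd h'.symm h1'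
        · push_cast; linarith
      push_cast [this]
      ring
    rw [hceil]

set_option maxHeartbeats 2000000 in
/-- `∫₀^t |ΔK(t,s)| ε(s) ds ≤ C n^(-2H-1/2)` uniformly in `n ≥ 1`, `t ∈ [0,1]`. -/
theorem deltaK_eps_integral_bound (H : ℝ) (hH0 : 0 < H) (hH1 : H < 1/2) :
    ∃ C > 0, ∀ n : ℕ, 1 ≤ n → ∀ t ∈ Set.Icc (0 : ℝ) 1,
      (∫ s in (0 : ℝ)..t, |deltaK H n t s| * epsFn H n s)
        ≤ C * (n : ℝ) ^ (-(2 * H) - 1/2) := by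
  have hp : H - 3/2 < -1 := by linarith
  have hSsum : Summable (fun m : ℕ => (m:ℝ) ^ (H - 3/2)) := Real.summable_nat_rpow.2 hp
  set S : ℝ := ∑' m : ℕ, (m:ℝ) ^ (H - 3/2) with hS
  have hS0 : 0 ≤ S := tsum_nonneg (fun m => Real.rpow_nonneg (Nat.cast_nonneg m) _)
  set C₁ : ℝ := (1/2 - H) / (H + 1/2) with hC₁
  have hC₁0 : 0 ≤ C₁ := by
    apply div_nonneg <;> linarith
  have hC : 0 < C₁ * S + 1/H := by
    have h1 : 0 < 1/H := by positivity
    nlinarith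
  refine ⟨C₁ * S + 1/H, hC, ?_⟩
  intro n hn t ht
  obtain ⟨ht0, ht1⟩ := ht
  have hn' : (0:ℝ) < n := by exact_mod_cast hn
  set X : ℝ := (n:ℝ) ^ (-(2 * H) - 1/2) with hXdef
  have hX0 : 0 < X := Real.rpow_pos_of_pos hn' _
  by_cases hg : IntervalIntegrable (fun s => |deltaK H n t s| * epsFn H n s) volume 0 t
  swap
  · rw [intervalIntegral.integral_undef hg]
    exact mul_nonneg hC.le hX0.le
  -- basic grid quantities
  set k : ℕ := (⌊(n:ℝ) * t⌋).toNat with hkdef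
  have hfl0 : (0:ℤ) ≤ ⌊(n:ℝ) * t⌋ := Int.floor_nonneg.2 (by positivity)
  have hkz : ((k:ℕ):ℤ) = ⌊(n:ℝ) * t⌋ := Int.toNat_of_nonneg hfl0
  have hkr : ((k:ℕ):ℝ) = ((⌊(n:ℝ) * t⌋ : ℤ) : ℝ) := by exact_mod_cast hkz
  set η : ℝ := (k:ℝ)/n with hηdef
  have hηeq : gridEta n t = η := by
    unfold gridEta; rw [hηdef, hkr]
  have hk_le : (k:ℝ) ≤ (n:ℝ) * t := by rw [hkr]; exact Int.floor_le _
  have hk_gt : (n:ℝ) * t < (k:ℝ) + 1 := by rw [hkr]; exact Int.lt_floor_add_one _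
  have hηt : η ≤ t := by rw [hηdef, div_le_iff₀ hn']; linarith
  have htk : t ≤ ((k:ℝ)+1)/n := by rw [le_div_iff₀ hn']; linarith
  have hη0 : 0 ≤ η := by positivity
  have hc : H - 1/2 < 0 := by linarith
  -- pointwise formula for |deltaK| left of η
  have habs_lt : ∀ s : ℝ, s < η →
      |deltaK H n t s| = (η - s) ^ (H-1/2) - (t - s) ^ (H-1/2) := by
    intro s hsη
    have hst : s < t := lt_of_lt_of_le hsη hηt
    have hmono : (t - s) ^ (H-1/2) ≤ (η - s) ^ (H-1/2) :=
      Real.rpow_le_rpow_of_nonpos (by linarith) (by linarith) hc.le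
    unfold deltaK fracK
    rw [hηeq, if_pos hsη, if_pos hst, abs_of_nonneg (by linarith)]
  -- integrability on subintervals
  have hint : ∀ u v : ℝ, 0 ≤ u → v ≤ t → u ≤ v →
      IntervalIntegrable (fun s => |deltaK H n t s| * epsFn H n s) volume u v := by
    intro u v hu hv huv
    apply hg.mono_set
    rw [Set.uIcc_of_le huv, Set.uIcc_of_le ht0]
    exact Set.Icc_subset_Icc (by linarith) hv
  -- pointwise bound on the final piece [η, t]
  have hptLast : ∀ s ∈ Set.Icc η t,
      |deltaK H n t s| * epsFn H n s ≤ (n:ℝ)^(-(1/2):ℝ) * (t - s) ^ (2*H-1) := by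
    intro s hs
    obtain ⟨hs1, hs2⟩ := hs
    have hRnn : 0 ≤ (n:ℝ)^(-(1/2):ℝ) * (t - s) ^ (2*H-1) :=
      mul_nonneg (Real.rpow_nonneg hn'.le _) (Real.rpow_nonneg (by linarith) _)
    rcases eq_or_lt_of_le hs2 with heq | hst
    · have hΔ : deltaK H n t s = 0 := by
        unfold deltaK fracK
        rw [hηeq, if_neg (not_lt.2 hs1), if_neg (by rw [heq]; exact lt_irrefl t)]
        ring
      rw [hΔ]; simpa using hRnn
    · have hΔ : |deltaK H n t s| = (t - s) ^ (H-1/2) := by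
        unfold deltaK fracK
        rw [hηeq, if_neg (not_lt.2 hs1), if_pos hst]
        rw [zero_sub, abs_neg, abs_of_nonneg (Real.rpow_nonneg (by linarith) _)]
      have hε : epsFn H n s ≤ (n:ℝ)^(-(1/2):ℝ) * (t - s) ^ (H-1/2) := by
        refine (epsFn_le H hn (j := k) hs1 (by linarith)).trans ?_
        have : (t - s) ^ (H-1/2) ≥ (((k:ℝ)+1)/n - s) ^ (H-1/2) :=
          Real.rpow_le_rpow_of_nonpos (by linarith) (by linarith) hc.le
        exact mul_le_mul_of_nonneg_left this (Real.rpow_nonneg hn'.le _)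
      calc |deltaK H n t s| * epsFn H n s
          ≤ (t - s) ^ (H-1/2) * ((n:ℝ)^(-(1/2):ℝ) * (t - s) ^ (H-1/2)) := by
            rw [hΔ]
            exact mul_le_mul_of_nonneg_left hε (Real.rpow_nonneg (by linarith) _)
        _ = (n:ℝ)^(-(1/2):ℝ) * (t - s) ^ (2*H-1) := by
            rw [show (2*H-1 : ℝ) = (H-1/2) + (H-1/2) by ring,
              Real.rpow_add (by linarith : (0:ℝ) < t - s)]
            ring
  set g : ℝ → ℝ := fun s => |deltaK H n t s| * epsFn H n s with hgdef
  have hr2H : (-1:ℝ) < 2*H - 1 := by linarith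
  have hrH : (-1:ℝ) < H - 1/2 := by linarith
  have hn0 : (0:ℝ) ≤ n := hn'.le
  have hA12 : (0:ℝ) ≤ (n:ℝ)^(-(1/2):ℝ) := Real.rpow_nonneg hn0 _
  have hq1 : (1/(n:ℝ)) ^ (2*H) = (n:ℝ) ^ (-(2*H)) := by
    rw [one_div, Real.inv_rpow hn0, ← Real.rpow_neg hn0]
  have hXsplit : (n:ℝ)^(-(1/2):ℝ) * (n:ℝ)^(-(2*H)) = X := by
    rw [← Real.rpow_add hn', hXdef]
    congr 1; ring
  have hηtill : ((k:ℝ)+1)/n = η + 1/n := by rw [hηdef]; ring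
  -- bound on the final piece [η, t]
  have hlast : ∫ s in η..t, g s ≤ X / (2*H) := by
    have hb := aux_cell_bound hr2H hηt (le_refl t) hA12 (hint η t hη0 (le_refl t) hηt) hptLast
    rw [show (2*H-1+1 : ℝ) = 2*H by ring] at hb
    refine hb.trans ?_
    have h1 : (t - η) ^ (2*H) ≤ (1/(n:ℝ)) ^ (2*H) := by
      apply Real.rpow_le_rpow (by linarith) (by rw [hηtill] at htk; linarith) (by linarith)
    calc (n:ℝ)^(-(1/2):ℝ) * ((t - η) ^ (2*H) / (2*H))
        ≤ (n:ℝ)^(-(1/2):ℝ) * ((1/(n:ℝ)) ^ (2*H) / (2*H)) := by gcongr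
      _ = X / (2*H) := by rw [hq1, ← hXsplit]; ring
  -- cell integrability
  have hcells : ∀ m : ℕ, m < k → IntervalIntegrable g volume (((m:ℕ):ℝ)/n) (((m+1:ℕ):ℝ)/n) := by
    intro m hm
    have hmk : ((m+1:ℕ):ℝ) ≤ (k:ℝ) := by exact_mod_cast hm
    apply hint
    · positivity
    · calc ((m+1:ℕ):ℝ)/n ≤ (k:ℝ)/n := by gcongr
        _ ≤ t := hηt
    · gcongr
      push_cast; linarith
  have hsum_eq := intervalIntegral.sum_integral_adjacent_intervals
    (f := g) (μ := volume) (a := fun j : ℕ => ((j:ℕ):ℝ)/(n:ℝ)) (n := k) hcells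
  simp only [Nat.cast_zero, zero_div] at hsum_eq
  rw [← hηdef] at hsum_eq
  have hadd : (∫ s in (0:ℝ)..t, g s) = (∫ s in (0:ℝ)..η, g s) + ∫ s in η..t, g s :=
    (intervalIntegral.integral_add_adjacent_intervals
      (hint 0 η le_rfl hηt hη0) (hint η t hη0 le_rfl hηt)).symm
  -- top cell bound
  have hcell_top : ∀ j : ℕ, j + 1 = k → ∫ s in ((j:ℕ):ℝ)/(n:ℝ)..(((j+1:ℕ)):ℝ)/(n:ℝ), g s ≤ X/(2*H) := by
    intro j hj
    have hjr : ((j+1:ℕ):ℝ) = (k:ℝ) := by exact_mod_cast hj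
    have hjr' : (j:ℝ)+1 = (k:ℝ) := by push_cast at hjr; linarith
    have hje : (((j+1:ℕ)):ℝ)/(n:ℝ) = η := by rw [hjr, hηdef]
    have hjη : ((j:ℕ):ℝ)/(n:ℝ) ≤ η := by rw [hηdef]; gcongr; linarith
    have hεη : epsFn H n η = 0 := by
      have hex : ∃ m : ℤ, (n:ℝ) * η = m := ⟨(k:ℤ), by rw [hηdef]; push_cast; field_simp⟩
      unfold epsFn
      rw [if_pos hex]
    have hpt : ∀ s ∈ Set.Icc (((j:ℕ):ℝ)/(n:ℝ)) η,
        g s ≤ (n:ℝ)^(-(1/2):ℝ) * (η - s) ^ (2*H-1) := by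
      intro s hs
      obtain ⟨hs1, hs2⟩ := hs
      have hRnn : 0 ≤ (n:ℝ)^(-(1/2):ℝ) * (η - s) ^ (2*H-1) :=
        mul_nonneg hA12 (Real.rpow_nonneg (by linarith) _)
      rcases eq_or_lt_of_le hs2 with heq | hsη
      · have : g s = 0 := by rw [hgdef]; simp only []; rw [heq, hεη, mul_zero]
        rw [this]; exact hRnn
      · have hst : s < t := lt_of_lt_of_le hsη hηt
        have hΔ : |deltaK H n t s| ≤ (η - s) ^ (H-1/2) := by
          rw [habs_lt s hsη]
          have : 0 ≤ (t - s)^(H-1/2) := Real.rpow_nonneg (by linarith) _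
          linarith
        have hε : epsFn H n s ≤ (n:ℝ)^(-(1/2):ℝ) * (η - s) ^ (H-1/2) := by
          have hje2 : ((j:ℝ)+1)/(n:ℝ) = η := by rw [hjr', hηdef]
          have h2 : s ≤ ((j:ℝ)+1)/(n:ℝ) := by rw [hje2]; exact hs2
          have := epsFn_le H hn (j := j) hs1 h2
          rwa [hje2] at this
        calc g s = |deltaK H n t s| * epsFn H n s := rfl
          _ ≤ (η - s) ^ (H-1/2) * ((n:ℝ)^(-(1/2):ℝ) * (η - s) ^ (H-1/2)) :=
              mul_le_mul hΔ hε (epsFn_nonneg H n s) (Real.rpow_nonneg (by linarith) _)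
          _ = (n:ℝ)^(-(1/2):ℝ) * (η - s) ^ (2*H-1) := by
              rw [show (2*H-1 : ℝ) = (H-1/2) + (H-1/2) by ring,
                Real.rpow_add (by linarith : (0:ℝ) < η - s)]
              ring
    have hb := aux_cell_bound hr2H hjη (le_refl η) hA12
      (hint _ _ (by positivity) hηt hjη) hpt
    rw [show (2*H-1+1 : ℝ) = 2*H by ring] at hb
    have hgap : η - ((j:ℕ):ℝ)/(n:ℝ) = 1/(n:ℝ) := by
      rw [hηdef, ← hjr']; ring
    rw [hgap] at hb
    rw [hje]
    refine hb.trans_eq ?_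
    rw [hq1, ← hXsplit]; ring
  -- small cell bound
  have hcell_small : ∀ j : ℕ, j + 1 < k →
      ∫ s in ((j:ℕ):ℝ)/(n:ℝ)..(((j+1:ℕ)):ℝ)/(n:ℝ), g s
        ≤ (C₁ * X) * ((k-1-j:ℕ):ℝ)^(H-3/2) := by
    intro j hj
    have hkj : ((k-1-j:ℕ):ℝ) = (k:ℝ)-1-(j:ℝ) := by
      rw [Nat.cast_sub (by omega : j ≤ k-1), Nat.cast_sub (by omega : 1 ≤ k)]
      push_cast; ring
    have hm1 : (0:ℝ) < ((k-1-j:ℕ):ℝ) := by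
      have : 0 < k-1-j := by omega
      exact_mod_cast this
    have hm0 : (0:ℝ) < ((k-1-j:ℕ):ℝ)/(n:ℝ) := div_pos hm1 hn'
    have hcast : ((j+1:ℕ):ℝ) = (j:ℝ)+1 := by push_cast; ring
    have hjk : (j:ℝ)+1 ≤ (k:ℝ)-1 := by
      have : (j+2 : ℕ) ≤ k := by omega
      have h' : ((j+2:ℕ):ℝ) ≤ (k:ℝ) := by exact_mod_cast this
      push_cast at h'; linarith
    have htη : t - η ≤ 1/(n:ℝ) := by rw [hηtill] at htk; linarith
    set B : ℝ := (1/2-H) * ((1/(n:ℝ)) * (((k-1-j:ℕ):ℝ)/(n:ℝ)) ^ (H-3/2)) with hB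
    have hB0 : 0 ≤ B := by
      apply mul_nonneg (by linarith)
      exact mul_nonneg (by positivity) (Real.rpow_nonneg hm0.le _)
    have hab : ((j:ℕ):ℝ)/(n:ℝ) ≤ (((j+1:ℕ)):ℝ)/(n:ℝ) := by
      gcongr; push_cast; linarith
    have hjk' : ((j+1:ℕ):ℝ) ≤ (k:ℝ) := by exact_mod_cast (le_of_lt hj)
    have hbt : (((j+1:ℕ)):ℝ)/(n:ℝ) ≤ t := by
      calc (((j+1:ℕ)):ℝ)/(n:ℝ) ≤ (k:ℝ)/(n:ℝ) := by gcongr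
        _ ≤ t := hηt
    have hpt : ∀ s ∈ Set.Icc (((j:ℕ):ℝ)/(n:ℝ)) ((((j+1:ℕ)):ℝ)/(n:ℝ)),
        g s ≤ (B * (n:ℝ)^(-(1/2):ℝ)) * ((((j+1:ℕ)):ℝ)/(n:ℝ) - s) ^ (H-1/2) := by
      intro s hs
      obtain ⟨hs1, hs2⟩ := hs
      have hs0 : (0:ℝ) ≤ s := le_trans (by positivity) hs1
      have hsη : s < η := by
        rw [hηdef]
        have : s ≤ ((j:ℝ)+1)/(n:ℝ) := by rw [← hcast]; exact hs2
        have hlt : ((j:ℝ)+1)/(n:ℝ) < (k:ℝ)/(n:ℝ) := by gcongr <;> linarith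
        linarith
      have hgap : ((k-1-j:ℕ):ℝ)/(n:ℝ) ≤ η - s := by
        have heq1 : (k:ℝ)/(n:ℝ) - ((k:ℝ)-1-(j:ℝ))/(n:ℝ) = ((j:ℝ)+1)/(n:ℝ) := by ring
        have hs2' : s ≤ ((j:ℝ)+1)/(n:ℝ) := by rw [← hcast]; exact hs2
        rw [hkj, hηdef]
        linarith
      have hΔ : |deltaK H n t s| ≤ B := by
        rw [habs_lt s hsη]
        refine (aux_mvt (by linarith : (0:ℝ) < η - s)
          (by linarith : η - s ≤ t - s) hc).trans ?_
        rw [hB, show (-(H-1/2) : ℝ) = 1/2-H by ring, show (H-1/2-1 : ℝ) = H-3/2 by ring]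
        apply mul_le_mul_of_nonneg_left _ (by linarith : (0:ℝ) ≤ 1/2-H)
        have h1 : t - s - (η - s) ≤ 1/(n:ℝ) := by linarith
        have h2 : (η - s) ^ (H-3/2) ≤ (((k-1-j:ℕ):ℝ)/(n:ℝ)) ^ (H-3/2) :=
          Real.rpow_le_rpow_of_nonpos hm0 hgap (by linarith)
        exact mul_le_mul h1 h2 (Real.rpow_nonneg (by linarith) _) (by positivity)
      have hε : epsFn H n s ≤ (n:ℝ)^(-(1/2):ℝ) * ((((j+1:ℕ)):ℝ)/(n:ℝ) - s) ^ (H-1/2) := by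
        have := epsFn_le H hn (j := j) hs1 (by rw [← hcast]; exact hs2)
        rwa [← hcast] at this
      calc g s = |deltaK H n t s| * epsFn H n s := rfl
        _ ≤ B * ((n:ℝ)^(-(1/2):ℝ) * ((((j+1:ℕ)):ℝ)/(n:ℝ) - s) ^ (H-1/2)) :=
            mul_le_mul hΔ hε (epsFn_nonneg H n s) hB0
        _ = (B * (n:ℝ)^(-(1/2):ℝ)) * ((((j+1:ℕ)):ℝ)/(n:ℝ) - s) ^ (H-1/2) := by ring
    have hb := aux_cell_bound hrH hab (le_refl _) (mul_nonneg hB0 hA12)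
      (hint _ _ (by positivity) hbt hab) hpt
    rw [show (H-1/2+1 : ℝ) = H+1/2 by ring] at hb
    have hgap2 : (((j+1:ℕ)):ℝ)/(n:ℝ) - ((j:ℕ):ℝ)/(n:ℝ) = 1/(n:ℝ) := by
      rw [hcast]; ring
    rw [hgap2] at hb
    refine hb.trans_eq ?_
    -- algebraic identification with C₁ * X * m^(H-3/2)
    have hq2 : (((k-1-j:ℕ):ℝ)/(n:ℝ)) ^ (H-3/2)
        = ((k-1-j:ℕ):ℝ)^(H-3/2) * (n:ℝ)^(-(H-3/2)) := by
      rw [Real.div_rpow hm1.le hn0, div_eq_mul_inv, ← Real.rpow_neg hn0]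
    have hq3 : (1/(n:ℝ))^(H+1/2) = (n:ℝ)^(-(H+1/2)) := by
      rw [one_div, Real.inv_rpow hn0, ← Real.rpow_neg hn0]
    have hq4 : (1/(n:ℝ)) = (n:ℝ)^(-1:ℝ) := by
      rw [Real.rpow_neg_one, one_div]
    have hnX2 : (n:ℝ)^(-1:ℝ) * (n:ℝ)^(-(H-3/2)) * (n:ℝ)^(-(1/2):ℝ) * (n:ℝ)^(-(H+1/2)) = X := by
      rw [← Real.rpow_add hn', ← Real.rpow_add hn', ← Real.rpow_add hn', hXdef]
      congr 1; ring
    rw [hB, hq2, hq3, hq4, hC₁, ← hnX2]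
    ring
  -- sum over small cells
  have hCX0 : 0 ≤ C₁ * X := mul_nonneg hC₁0 hX0.le
  have hsum_le : (∑ j ∈ Finset.range k, ∫ s in ((j:ℕ):ℝ)/(n:ℝ)..(((j+1:ℕ)):ℝ)/(n:ℝ), g s)
      ≤ C₁*S*X + X/(2*H) := by
    rcases Nat.eq_zero_or_pos k with hk0 | hk1
    · rw [hk0]
      simp only [Finset.range_zero, Finset.sum_empty]
      have : 0 ≤ C₁*S*X := mul_nonneg (mul_nonneg hC₁0 hS0) hX0.le
      have h2 : 0 ≤ X/(2*H) := div_nonneg hX0.le (by linarith)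
      linarith
    · obtain ⟨k', hk'⟩ : ∃ k', k = k'+1 := ⟨k-1, (Nat.succ_pred_eq_of_pos hk1).symm⟩
      rw [hk', Finset.sum_range_succ]
      have h1 : (∑ j ∈ Finset.range k', ∫ s in ((j:ℕ):ℝ)/(n:ℝ)..(((j+1:ℕ)):ℝ)/(n:ℝ), g s)
          ≤ ∑ j ∈ Finset.range k', (C₁ * X) * ((k-1-j:ℕ):ℝ)^(H-3/2) :=
        Finset.sum_le_sum (fun j hj => hcell_small j (by
          have := Finset.mem_range.1 hj; omega))
      have h3 : (∑ j ∈ Finset.range k', ((k-1-j:ℕ):ℝ)^(H-3/2)) ≤ S := by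
        have hcg : ∀ j ∈ Finset.range k', ((k-1-j:ℕ):ℝ)^(H-3/2) = ((k'-1-j+1:ℕ):ℝ)^(H-3/2) := by
          intro j hj
          have hjlt := Finset.mem_range.1 hj
          have : k-1-j = k'-1-j+1 := by omega
          rw [this]
        rw [Finset.sum_congr rfl hcg,
          Finset.sum_range_reflect (fun i => ((i+1:ℕ):ℝ)^(H-3/2)) k']
        have hsummable' : Summable (fun j : ℕ => ((j+1:ℕ):ℝ)^(H-3/2)) :=
          (summable_nat_add_iff 1).2 hSsum
        refine (Summable.sum_le_tsum (Finset.range k')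
          (fun i _ => Real.rpow_nonneg (Nat.cast_nonneg _) _) hsummable').trans ?_
        have h0' : ((0:ℕ):ℝ)^(H-3/2) = 0 := by
          rw [Nat.cast_zero, Real.zero_rpow (by intro hcon; linarith : (H-3/2 : ℝ) ≠ 0)]
        have hz := Summable.tsum_eq_zero_add hSsum
        rw [hS]
        linarith [hz, h0']
      have h4 : (∫ s in ((k':ℕ):ℝ)/(n:ℝ)..(((k'+1:ℕ)):ℝ)/(n:ℝ), g s) ≤ X/(2*H) :=
        hcell_top k' (by omega)
      have h5 : (∑ j ∈ Finset.range k', (C₁ * X) * ((k-1-j:ℕ):ℝ)^(H-3/2))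
          = (C₁*X) * ∑ j ∈ Finset.range k', ((k-1-j:ℕ):ℝ)^(H-3/2) := by
        rw [Finset.mul_sum]
      have h6 : (C₁*X) * (∑ j ∈ Finset.range k', ((k-1-j:ℕ):ℝ)^(H-3/2)) ≤ (C₁*X) * S :=
        mul_le_mul_of_nonneg_left h3 hCX0
      have := add_le_add ((h1.trans_eq h5).trans h6) h4
      calc (∑ j ∈ Finset.range k', ∫ s in ((j:ℕ):ℝ)/(n:ℝ)..(((j+1:ℕ)):ℝ)/(n:ℝ), g s)
            + ∫ s in ((k':ℕ):ℝ)/(n:ℝ)..(((k'+1:ℕ)):ℝ)/(n:ℝ), g s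
          ≤ (C₁*X)*S + X/(2*H) := this
        _ = C₁*S*X + X/(2*H) := by ring
  -- final assembly
  have goalEq : (∫ s in (0:ℝ)..t, |deltaK H n t s| * epsFn H n s)
      = (∑ j ∈ Finset.range k, ∫ s in ((j:ℕ):ℝ)/(n:ℝ)..(((j+1:ℕ)):ℝ)/(n:ℝ), g s)
        + ∫ s in η..t, g s := by
    rw [show (∫ s in (0:ℝ)..t, |deltaK H n t s| * epsFn H n s) = ∫ s in (0:ℝ)..t, g s from rfl,
      hadd, ← hsum_eq]
  rw [goalEq]
  have hfin : C₁*S*X + X/(2*H) + X/(2*H) ≤ (C₁ * S + 1/H) * X := by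
    have hhalf : X/(2*H) + X/(2*H) = (1/H)*X := by
      field_simp
      ring
    have hexp : (C₁*S + 1/H)*X = C₁*S*X + (1/H)*X := by ring
    linarith
  calc (∑ j ∈ Finset.range k, ∫ s in ((j:ℕ):ℝ)/(n:ℝ)..(((j+1:ℕ)):ℝ)/(n:ℝ), g s)
        + ∫ s in η..t, g s
      ≤ (C₁*S*X + X/(2*H)) + X/(2*H) := add_le_add hsum_le hlast
    _ ≤ (C₁ * S + 1/H) * X := by linarith [hfin]
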